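/- Let M1 and M2 be simple matroids on E1 and E2 with E1 ∩ E2 = {p}, where p is not a coloop of M1 or of M2. Let M = P_p(M1,M2) and M' = M \ p. If (H1, H2, H3) is a modular triple of hyperplanes of M, then (H1 − {p}, H2 − {p}, H3 − {p}) is a modular triple of hyperplanes of M'. -/

import Mathlib

open Matroid Set

variable {α : Type*}

/-- The rank of a set `X` in a matroid `M`: the supremum of the cardinalities of the
independent subsets of `X`. -/
noncomputable def mRk (M : Matroid α) (X : Set α) : ℕ :=
  sSup {n : ℕ | ∃ I, M.Indep I ∧ I ⊆ X ∧ I.ncard = n}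

/-- The rank of a matroid `M`. -/
noncomputable def mRank (M : Matroid α) : ℕ := mRk M M.E

/-- `T` is a modular flat of `M`: `T` is a flat and
`r(T) + r(F) = r(T ∩ F) + r(T ∪ F)` holds for every flat `F` of `M`. -/
def IsModFlat (M : Matroid α) (T : Set α) : Prop :=
  M.IsFlat T ∧ ∀ F, M.IsFlat F → mRk M T + mRk M F = mRk M (T ∩ F) + mRk M (T ∪ F)

/-- `H` is a hyperplane of `M`: a flat of rank `r(M) - 1`. -/
def IsHyp (M : Matroid α) (H : Set α) : Prop :=
  M.IsFlat H ∧ mRk M H + 1 = mRank M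

/-- `F` is a corank-2 flat of `M`: a flat of rank `r(M) - 2`. -/
def IsCr2Flat (M : Matroid α) (F : Set α) : Prop :=
  M.IsFlat F ∧ mRk M F + 2 = mRank M

/-- `F` is a corank-3 flat of `M`: a flat of rank `r(M) - 3`. -/
def IsCr3Flat (M : Matroid α) (F : Set α) : Prop :=
  M.IsFlat F ∧ mRk M F + 3 = mRank M

/-- `(H1, H2, H3)` is a modular triple of hyperplanes of `M`: the three sets are
hyperplanes, `F = H1 ∩ H2 ∩ H3` is a corank-2 flat, and `Hi ∩ Hj = F` for all `i ≠ j`. -/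
def ModTriple (M : Matroid α) (H1 H2 H3 : Set α) : Prop :=
  IsHyp M H1 ∧ IsHyp M H2 ∧ IsHyp M H3 ∧
  IsCr2Flat M (H1 ∩ H2 ∩ H3) ∧
  H1 ∩ H2 = H1 ∩ H2 ∩ H3 ∧ H1 ∩ H3 = H1 ∩ H2 ∩ H3 ∧ H2 ∩ H3 = H1 ∩ H2 ∩ H3

/-- `M` is the generalized parallel connection of `M1` and `M2`: its ground set is
`M1.E ∪ M2.E`, and its flats are exactly the sets `F ⊆ M1.E ∪ M2.E` such that
`F ∩ M1.E` is a flat of `M1` and `F ∩ M2.E` is a flat of `M2`. -/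
def IsGPC (M1 M2 M : Matroid α) : Prop :=
  M.E = M1.E ∪ M2.E ∧
    ∀ F : Set α, M.IsFlat F ↔ F ⊆ M1.E ∪ M2.E ∧ M1.IsFlat (F ∩ M1.E) ∧ M2.IsFlat (F ∩ M2.E)

/-- The deletion `M \ D` of a set `D` from `M`. -/
def mDelete (M : Matroid α) (D : Set α) : Matroid α := M ↾ (M.E \ D)

/-- The contraction `M / C`, obtained via duality as `(M✶ \ C)✶`. -/
def mContract (M : Matroid α) (C : Set α) : Matroid α := (M✶ ↾ (M.E \ C))✶

/-- `N` is a minor of `M`: `N` is obtained from `M` by a contraction followed by a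
deletion. -/
def MinorOf (N M : Matroid α) : Prop :=
  ∃ C D : Set α, C ⊆ M.E ∧ D ⊆ M.E ∧ Disjoint C D ∧
    N = (mContract M C) ↾ ((M.E \ C) \ D)

/-- `C` is a circuit of `M`: a minimal dependent subset of the ground set. -/
def MCircuit (M : Matroid α) (C : Set α) : Prop :=
  C ⊆ M.E ∧ ¬ M.Indep C ∧ ∀ D ⊂ C, M.Indep D

/-- `e` is a loop of `M`. -/
def MLoop (M : Matroid α) (e : α) : Prop := e ∈ M.E ∧ ¬ M.Indep {e}

/-- `e` is a coloop of `M`: an element of the ground set lying in every base. -/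
def MColoop (M : Matroid α) (e : α) : Prop := e ∈ M.E ∧ ∀ B, M.IsBase B → e ∈ B

/-- `M` is simple: every subset of the ground set with at most two elements is
independent; equivalently, `M` has no loops and no two-element circuits. -/
def MSimple (M : Matroid α) : Prop := ∀ S ⊆ M.E, S.ncard ≤ 2 → M.Indep S

/-- `X` is co-independent in `M`: the complement `M.E \ X` is spanning. -/
def MCoindep (M : Matroid α) (X : Set α) : Prop := M.Spanning (M.E \ X)

/-- The connected component of `M` containing `e`: the set of `f` in the ground set with
`e = f` or some circuit containing both `e` and `f`. -/
def MComponentOf (M : Matroid α) (e : α) : Set α :=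
  {f | f ∈ M.E ∧ (e = f ∨ ∃ C, MCircuit M C ∧ e ∈ C ∧ f ∈ C)}

/-- `K` is a connected component of `M`. -/
def MComponent (M : Matroid α) (K : Set α) : Prop :=
  ∃ e ∈ M.E, K = MComponentOf M e

/-- The restriction `M|X` is (isomorphic to) the rank-2 uniform matroid `U_{2,n}`:
`X` is an `n`-element subset of the ground set and a subset of `X` is independent
exactly when it has at most 2 elements. -/
def RestrIsU2 (M : Matroid α) (X : Set α) (n : ℕ) : Prop :=
  X ⊆ M.E ∧ X.ncard = n ∧ ∀ S ⊆ X, (M.Indep S ↔ S.ncard ≤ 2)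

/-- `Θ` is a copy of the matroid `Θ_n`, with `X = {x 1, …, x n}` and `Y = {y 1, …, y n}`
disjoint, whose bases are exactly `Y`, the sets `(Y \ {y i}) ∪ {x j}` for `i ≠ j`, and
the sets `(Y \ Y') ∪ X'` with `Y' ⊆ Y`, `X' ⊆ X`, `|Y'| = |X'| = 2`. -/
def IsTheta (n : ℕ) (x y : Fin n → α) (Θ : Matroid α) : Prop :=
  Function.Injective x ∧ Function.Injective y ∧ (∀ i j, x i ≠ y j) ∧
  Θ.E = Set.range x ∪ Set.range y ∧
  ∀ B : Set α, Θ.IsBase B ↔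
    (B = Set.range y ∨
    (∃ i j, i ≠ j ∧ B = (Set.range y \ {y i}) ∪ {x j}) ∨
    (∃ P Q : Set (Fin n), P.ncard = 2 ∧ Q.ncard = 2 ∧
      B = (Set.range y \ (y '' P)) ∪ x '' Q))

/-- `M` is representable over the field `K`: there is a map from the ground set to a
`K`-vector space under which a subset of the ground set is independent in `M` exactly
when its image (as a family) is linearly independent. -/
def RepOver (K : Type*) [Field K] {α : Type*} (M : Matroid α) : Prop :=
  ∃ (V : Type) (_ : AddCommGroup V) (_ : Module K V) (φ : α → V),
    ∀ I ⊆ M.E, (M.Indep I ↔ LinearIndependent K (fun e : I => φ e.1))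

section Aux

lemma mRk_eq_ncard_of_basis {M : Matroid α} [M.Finite] {I X : Set α} (hX : X ⊆ M.E)
    (hI : M.IsBasis I X) : mRk M X = I.ncard := by
  have hub : ∀ n ∈ {n : ℕ | ∃ J, M.Indep J ∧ J ⊆ X ∧ J.ncard = n}, n ≤ I.ncard := by
    rintro n ⟨J, hJ, hJX, rfl⟩
    obtain ⟨K, hK, hJK⟩ := hJ.subset_isBasis_of_subset hJX hX
    have hKfin : K.Finite := M.ground_finite.subset hK.indep.subset_ground
    have hKI : K.ncard = I.ncard := by
      rw [Set.ncard_def, Set.ncard_def, hK.encard_eq_encard hI]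
    calc J.ncard ≤ K.ncard := Set.ncard_le_ncard hJK hKfin
      _ = I.ncard := hKI
  exact le_antisymm (csSup_le ⟨I.ncard, I, hI.indep, hI.subset, rfl⟩ hub)
    (le_csSup ⟨I.ncard, hub⟩ ⟨I, hI.indep, hI.subset, rfl⟩)

lemma mRk_closure_eq {M : Matroid α} [M.Finite] {X : Set α} (hX : X ⊆ M.E) :
    mRk M (M.closure X) = mRk M X := by
  obtain ⟨I, hI⟩ := M.exists_isBasis X hX
  rw [mRk_eq_ncard_of_basis (M.closure_subset_ground X) hI.isBasis_closure_right,
      mRk_eq_ncard_of_basis hX hI]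

lemma mRk_restrict {M : Matroid α} {R X : Set α} (hXR : X ⊆ R) :
    mRk (M ↾ R) X = mRk M X := by
  unfold mRk
  congr 1
  ext n
  constructor <;> rintro ⟨I, hI, hIX, rfl⟩
  · exact ⟨I, (Matroid.restrict_indep_iff.1 hI).1, hIX, rfl⟩
  · exact ⟨I, Matroid.restrict_indep_iff.2 ⟨hI, hIX.trans hXR⟩, hIX, rfl⟩

lemma mRk_lt_of_flat_ssubset {M : Matroid α} [M.Finite] {F G : Set α}
    (hF : M.IsFlat F) (hG : M.IsFlat G) (hss : F ⊂ G) : mRk M F < mRk M G := by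
  obtain ⟨I, hI⟩ := M.exists_isBasis F hF.subset_ground
  obtain ⟨J, hJ, hIJ⟩ :=
    hI.indep.subset_isBasis_of_subset (hI.subset.trans hss.subset) hG.subset_ground
  rw [mRk_eq_ncard_of_basis hF.subset_ground hI, mRk_eq_ncard_of_basis hG.subset_ground hJ]
  have hne : I ≠ J := by
    rintro rfl
    exact hss.ne (by rw [← hF.closure, ← hG.closure, ← hI.closure_eq_closure,
      ← hJ.closure_eq_closure])
  exact Set.ncard_lt_ncard (ssubset_iff_subset_ne.2 ⟨hIJ, hne⟩)
    (M.ground_finite.subset hJ.indep.subset_ground)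

lemma flat_of_closure_eq {M : Matroid α} {F : Set α} (hFE : F ⊆ M.E)
    (h : M.closure F = F) : M.IsFlat F := by
  refine ⟨fun I X hIF hIX => ?_, hFE⟩
  have hX := hIX.subset_closure
  rwa [hIF.closure_eq_closure, h] at hX

lemma closure_flat' (M : Matroid α) (X : Set α) : M.IsFlat (M.closure X) :=
  flat_of_closure_eq (M.closure_subset_ground X) (M.closure_closure X)

lemma flat_restrict_inter {M : Matroid α} {R F : Set α} (hR : R ⊆ M.E) (hF : M.IsFlat F) :
    (M ↾ R).IsFlat (F ∩ R) := by
  refine ⟨fun I X hI hX => ?_, inter_subset_right⟩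
  rw [Matroid.isBasis_restrict_iff hR] at hI hX
  obtain ⟨hI, hIR⟩ := hI
  obtain ⟨hX, hXR⟩ := hX
  have h1 : X ⊆ M.closure I := hX.subset_closure
  rw [hI.closure_eq_closure] at h1
  have h2 : M.closure (F ∩ R) ⊆ F :=
    (M.closure_subset_closure inter_subset_left).trans hF.closure.subset
  exact subset_inter (h1.trans h2) hXR

end Aux

/-- For simple matroids `M1, M2` with `E1 ∩ E2 = {p}` and `p` not a
coloop of either, if `(H1, H2, H3)` is a modular triple of hyperplanes of
`M = P_p(M1, M2)`, then `(H1 \ {p}, H2 \ {p}, H3 \ {p})` is a modular triple of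
hyperplanes of `M' = M \ p`. -/
theorem parallel_connection_delete_modular_triple (M1 M2 M : Matroid α)
    [M1.Finite] [M2.Finite] (E1 E2 : Set α) (p : α)
    (hE1 : M1.E = E1) (hE2 : M2.E = E2) (hp : E1 ∩ E2 = {p})
    (hs1 : MSimple M1) (hs2 : MSimple M2)
    (hc1 : ¬ MColoop M1 p) (hc2 : ¬ MColoop M2 p)
    (hM : IsGPC M1 M2 M) :
    ∀ H1 H2 H3 : Set α, ModTriple M H1 H2 H3 →
      ModTriple (mDelete M {p}) (H1 \ {p}) (H2 \ {p}) (H3 \ {p}) := by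
  subst hE1 hE2
  clear hs1 hs2
  have hME : M.E = M1.E ∪ M2.E := hM.1
  haveI hMfin : M.Finite := ⟨by rw [hME]; exact M1.ground_finite.union M2.ground_finite⟩
  have hpp : p ∈ M1.E ∩ M2.E := by rw [hp]; exact mem_singleton p
  have hp1 : p ∈ M1.E := hpp.1
  have hp2 : p ∈ M2.E := hpp.2
  have hE1M : M1.E ⊆ M.E := by rw [hME]; exact subset_union_left
  have hE2M : M2.E ⊆ M.E := by rw [hME]; exact subset_union_right
  -- the key closure lemma
  have hL : ∀ X ⊆ M.E, (M1.E \ {p} ⊆ X ∨ M2.E \ {p} ⊆ X) → p ∈ M.closure X := by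
    intro X hXE hsub
    set G := M.closure X with hG
    have hGflat : M.IsFlat G := closure_flat' M X
    obtain ⟨hGE, hG1, hG2⟩ := (hM.2 G).1 hGflat
    have hXG : X ⊆ G := M.subset_closure X hXE
    rcases hsub with h | h
    · obtain ⟨B, hB, hpB⟩ : ∃ B, M1.IsBase B ∧ p ∉ B := by
        by_contra hco
        push_neg at hco
        exact hc1 ⟨hp1, fun B hB => hco B hB⟩
      have hBsub : B ⊆ M1.E \ {p} :=
        subset_diff.2 ⟨hB.subset_ground, disjoint_singleton_right.2 hpB⟩
      have hpcl1 : p ∈ M1.closure (M1.E \ {p}) := by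
        have h2 := M1.closure_subset_closure hBsub
        rw [hB.closure_eq] at h2
        exact h2 hp1
      have hsub1 : M1.E \ {p} ⊆ G ∩ M1.E :=
        subset_inter (h.trans hXG) diff_subset
      have hcl : M1.closure (M1.E \ {p}) ⊆ G ∩ M1.E := by
        rw [← hG1.closure]
        exact M1.closure_subset_closure hsub1
      exact (hcl hpcl1).1
    · obtain ⟨B, hB, hpB⟩ : ∃ B, M2.IsBase B ∧ p ∉ B := by
        by_contra hco
        push_neg at hco
        exact hc2 ⟨hp2, fun B hB => hco B hB⟩
      have hBsub : B ⊆ M2.E \ {p} :=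
        subset_diff.2 ⟨hB.subset_ground, disjoint_singleton_right.2 hpB⟩
      have hpcl2 : p ∈ M2.closure (M2.E \ {p}) := by
        have h2 := M2.closure_subset_closure hBsub
        rw [hB.closure_eq] at h2
        exact h2 hp2
      have hsub2 : M2.E \ {p} ⊆ G ∩ M2.E :=
        subset_inter (h.trans hXG) diff_subset
      have hcl : M2.closure (M2.E \ {p}) ⊆ G ∩ M2.E := by
        rw [← hG2.closure]
        exact M2.closure_subset_closure hsub2
      exact (hcl hpcl2).1
  -- hyperplanes through p contain one of the two ground sets
  have hC : ∀ H, M.IsFlat H → mRk M H + 1 = mRank M → p ∈ H → (M1.E ⊆ H ∨ M2.E ⊆ H) := by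
    intro H hHflat hHrk hpH
    by_contra hcon
    push_neg at hcon
    obtain ⟨hn1, hn2⟩ := hcon
    have hHE : H ⊆ M.E := hHflat.subset_ground
    obtain ⟨_, hHf1, hHf2⟩ := (hM.2 H).1 hHflat
    have hFu1 : (M1.E ∪ H) ∩ M1.E = M1.E := by
      apply subset_antisymm inter_subset_right
      exact subset_inter subset_union_left Subset.rfl
    have hFu2 : (M1.E ∪ H) ∩ M2.E = H ∩ M2.E := by
      apply subset_antisymm
      · rintro x ⟨hx, hx2⟩
        rcases hx with hx1 | hxH
        · have : x ∈ M1.E ∩ M2.E := ⟨hx1, hx2⟩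
          rw [hp] at this
          rw [mem_singleton_iff.1 this]
          exact ⟨hpH, hp2⟩
        · exact ⟨hxH, hx2⟩
      · exact fun x hx => ⟨Or.inr hx.1, hx.2⟩
    have hFuflat : M.IsFlat (M1.E ∪ H) := by
      refine (hM.2 (M1.E ∪ H)).2 ⟨union_subset subset_union_left (hHE.trans_eq hME), ?_, ?_⟩
      · rw [hFu1]; exact M1.ground_isFlat
      · rw [hFu2]; exact hHf2
    have hss1 : H ⊂ (M1.E ∪ H) := by
      refine ssubset_iff_subset_ne.2 ⟨subset_union_right, ?_⟩
      intro heq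
      exact hn1 (by rw [heq]; exact subset_union_left)
    have hss2 : (M1.E ∪ H) ⊂ M.E := by
      refine ssubset_iff_subset_ne.2 ⟨union_subset hE1M hHE, ?_⟩
      intro hFE
      apply hn2
      intro x hx2
      have hxFu : x ∈ (M1.E ∪ H) := by rw [hFE]; exact hE2M hx2
      rcases hxFu with hx1 | hxH
      · have : x ∈ M1.E ∩ M2.E := ⟨hx1, hx2⟩
        rw [hp] at this
        rw [mem_singleton_iff.1 this]
        exact hpH
      · exact hxH
    have hlt1 : mRk M H < mRk M (M1.E ∪ H) := mRk_lt_of_flat_ssubset hHflat hFuflat hss1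
    have hlt2 : mRk M (M1.E ∪ H) < mRk M M.E := mRk_lt_of_flat_ssubset hFuflat M.ground_isFlat hss2
    have : mRk M M.E = mRank M := rfl
    omega
  -- deleting p from suitable flats preserves rank
  have hRkDiff : ∀ X, M.IsFlat X → (M1.E ⊆ X ∨ M2.E ⊆ X ∨ p ∉ X) →
      mRk M (X \ {p}) = mRk M X := by
    intro X hX hcase
    by_cases hpX : p ∈ X
    · have hXE := hX.subset_ground
      have hsub : M1.E \ {p} ⊆ X \ {p} ∨ M2.E \ {p} ⊆ X \ {p} := by
        rcases hcase with h | h | h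
        · exact Or.inl (diff_subset_diff_left h)
        · exact Or.inr (diff_subset_diff_left h)
        · exact absurd hpX h
      have hpcl : p ∈ M.closure (X \ {p}) := hL _ (diff_subset.trans hXE) hsub
      have hXsub : X ⊆ M.closure (X \ {p}) := by
        intro x hx
        by_cases hxp : x ∈ ({p} : Set α)
        · rwa [mem_singleton_iff.1 hxp]
        · exact M.subset_closure _ (diff_subset.trans hXE) ⟨hx, hxp⟩
      have hcleq : M.closure (X \ {p}) = X := by
        refine subset_antisymm ?_ hXsub
        calc M.closure (X \ {p}) ⊆ M.closure X := M.closure_subset_closure diff_subset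
          _ = X := hX.closure
      rw [← mRk_closure_eq (M := M) (diff_subset.trans hXE), hcleq]
    · rw [diff_singleton_eq_self hpX]
  -- rank of the deletion
  have hMdel : mDelete M {p} = M ↾ (M.E \ {p}) := rfl
  have hrank' : mRank (mDelete M {p}) = mRank M := by
    rw [hMdel]
    show mRk (M ↾ (M.E \ {p})) (M.E \ {p}) = mRk M M.E
    rw [mRk_restrict Subset.rfl]
    exact hRkDiff M.E M.ground_isFlat (Or.inl hE1M)
  -- generic facts about sets
  have hcap : ∀ A : Set α, A ⊆ M.E → A \ {p} = A ∩ (M.E \ {p}) := by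
    intro A hA
    ext x
    exact ⟨fun h => ⟨h.1, hA h.1, h.2⟩, fun h => ⟨h.1, h.2.2⟩⟩
  have hdiffinter : ∀ A B : Set α, (A \ {p}) ∩ (B \ {p}) = (A ∩ B) \ {p} := by
    intro A B
    ext x
    simp only [mem_inter_iff, mem_diff]
    tauto
  -- hyperplanes are preserved
  have hHyp : ∀ H, IsHyp M H → IsHyp (mDelete M {p}) (H \ {p}) := by
    rintro H ⟨hHflat, hHrk⟩
    have hHE : H ⊆ M.E := hHflat.subset_ground
    have hcase : M1.E ⊆ H ∨ M2.E ⊆ H ∨ p ∉ H := by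
      by_cases hpH : p ∈ H
      · rcases hC H hHflat hHrk hpH with h | h
        · exact Or.inl h
        · exact Or.inr (Or.inl h)
      · exact Or.inr (Or.inr hpH)
    constructor
    · rw [hMdel, hcap H hHE]
      exact flat_restrict_inter diff_subset hHflat
    · rw [hMdel]
      show mRk (M ↾ (M.E \ {p})) (H \ {p}) + 1 = mRank (M ↾ (M.E \ {p}))
      rw [mRk_restrict (diff_subset_diff_left hHE), hRkDiff H hHflat hcase]
      show mRk M H + 1 = mRank (mDelete M {p})
      rw [hrank']
      exact hHrk
  rintro H1 H2 H3 ⟨h1, h2, h3, hF, h12, h13, h23⟩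
  have hFflat := hF.1
  have hFE : H1 ∩ H2 ∩ H3 ⊆ M.E := hFflat.subset_ground
  have hpH : p ∈ H1 ∩ H2 ∩ H3 → (M1.E ⊆ H1 ∩ H2 ∩ H3 ∨ M2.E ⊆ H1 ∩ H2 ∩ H3) := by
    rintro ⟨⟨hpH1, hpH2⟩, hpH3⟩
    have d1 := hC H1 h1.1 h1.2 hpH1
    have d2 := hC H2 h2.1 h2.2 hpH2
    have d3 := hC H3 h3.1 h3.2 hpH3
    rcases d1 with d1 | d1 <;> rcases d2 with d2 | d2 <;> rcases d3 with d3 | d3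
    · exact Or.inl (h12 ▸ subset_inter d1 d2)
    · exact Or.inl (h12 ▸ subset_inter d1 d2)
    · exact Or.inl (h13 ▸ subset_inter d1 d3)
    · exact Or.inr (h23 ▸ subset_inter d2 d3)
    · exact Or.inl (h23 ▸ subset_inter d2 d3)
    · exact Or.inr (h13 ▸ subset_inter d1 d3)
    · exact Or.inr (h12 ▸ subset_inter d1 d2)
    · exact Or.inr (h12 ▸ subset_inter d1 d2)
  have hFcase : M1.E ⊆ H1 ∩ H2 ∩ H3 ∨ M2.E ⊆ H1 ∩ H2 ∩ H3 ∨ p ∉ H1 ∩ H2 ∩ H3 := by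
    by_cases hpF : p ∈ H1 ∩ H2 ∩ H3
    · rcases hpH hpF with h | h
      · exact Or.inl h
      · exact Or.inr (Or.inl h)
    · exact Or.inr (Or.inr hpF)
  have hFdel : (H1 \ {p}) ∩ (H2 \ {p}) ∩ (H3 \ {p}) = (H1 ∩ H2 ∩ H3) \ {p} := by
    rw [hdiffinter, hdiffinter]
  refine ⟨hHyp H1 h1, hHyp H2 h2, hHyp H3 h3, ?_, ?_, ?_, ?_⟩
  · rw [hFdel]
    constructor
    · rw [hMdel, hcap _ hFE]
      exact flat_restrict_inter diff_subset hFflat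
    · rw [hMdel]
      show mRk (M ↾ (M.E \ {p})) ((H1 ∩ H2 ∩ H3) \ {p}) + 2 = mRank (M ↾ (M.E \ {p}))
      rw [mRk_restrict (diff_subset_diff_left hFE), hRkDiff _ hFflat hFcase]
      show mRk M (H1 ∩ H2 ∩ H3) + 2 = mRank (mDelete M {p})
      rw [hrank']
      exact hF.2
  · rw [hFdel, hdiffinter]
    exact congrArg (fun s => s \ {p}) h12
  · rw [hFdel, hdiffinter]
    exact congrArg (fun s => s \ {p}) h13
  · rw [hFdel, hdiffinter]
    exact congrArg (fun s => s \ {p}) h23
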